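/- In the OSHeDA setting, the relabeled source error satisfies Er(P_s^u, f_s) ≤ Er(P_{t,u}, f_t) + √2·C·(D_JS(P_s(Z) ‖ P_{t,u}(Z)))^{1/2}. (An intermediate inequality in the proof of Proposition 1, bounding the source error on the unknown label by the unknown-class target error plus a representation-distance term.) -/

import Mathlib

open MeasureTheory ProbabilityTheory Real
open scoped ENNReal

/-- Kullback–Leibler divergence `KL(P ‖ Q)`: `∫ log (dP/dQ) dP` when `P ≪ Q` (and the
log-likelihood ratio is integrable), and `+∞` otherwise. -/
noncomputable def klDiv {Ω : Type*} [MeasurableSpace Ω] (P Q : Measure Ω) : ℝ≥0∞ :=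
  open Classical in
  if P ≪ Q ∧ Integrable (llr P Q) P then ENNReal.ofReal (∫ ω, llr P Q ω ∂P) else ∞

/-- The midpoint measure `M = (1/2)·P + (1/2)·Q`. -/
noncomputable def midMeasure {Ω : Type*} [MeasurableSpace Ω] (P Q : Measure Ω) : Measure Ω :=
  (2⁻¹ : ℝ≥0∞) • P + (2⁻¹ : ℝ≥0∞) • Q

/-- Jensen–Shannon divergence `D_JS(P ‖ Q) = (1/2)·KL(P ‖ M) + (1/2)·KL(Q ‖ M)` where
`M` is the midpoint measure. -/
noncomputable def jsDiv {Ω : Type*} [MeasurableSpace Ω] (P Q : Measure Ω) : ℝ≥0∞ :=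
  2⁻¹ * klDiv P (midMeasure P Q) + 2⁻¹ * klDiv Q (midMeasure P Q)

/-!
Write `M` for the midpoint of `P` and `Q` and `F`, `G` for the densities of `P`, `Q` with respect
to `M`; since `P + Q = 2 • M`, `F + G = 2` and `0 ≤ F ≤ 2`. For `0 ≤ u ≤ C`,
`∫ u dP - ∫ u dQ = ∫ (F - G) (u - C/2) dM ≤ C ∫ |F - 1| dM ≤ C (∫ (F - 1)² dM)^{1/2}`,
and the pointwise inequality `(x - 1)² ≤ klFun x + klFun (2 - x)` on `[0, 2]` bounds
`∫ (F - 1)² dM` by `KL(P ‖ M) + KL(Q ‖ M) = 2 D_JS(P ‖ Q)`. The theorem is this bound for the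
representations of `P_s` and `P_{t,u}` and `u = ℓ(·, unk)`, because `P_{t,u}`-almost every label
is `unk`.
-/

open InformationTheory (klFun klFun_apply klFun_one klFun_zero klFun_nonneg hasDerivAt_klFun)

lemma two_mul_le_log_one_add_sub_log_one_sub {t : ℝ} (h0 : 0 ≤ t) (h1 : t < 1) :
    2 * t ≤ log (1 + t) - log (1 - t) := by
  have hsum := hasSum_log_sub_log_of_abs_lt_one (x := t) (by rwa [abs_of_nonneg h0])
  simpa using le_hasSum hsum 0 fun k _ => by positivity

lemma klFun_le_sq_sub_one {x : ℝ} (hx : 0 ≤ x) : klFun x ≤ (x - 1) ^ 2 := by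
  rcases hx.eq_or_lt with rfl | hx
  · simp [klFun_zero]
  have := mul_le_mul_of_nonneg_left (log_le_sub_one_of_pos hx) hx.le
  rw [klFun_apply]
  nlinarith

lemma sq_le_klFun_one_add_add_klFun_one_sub {t : ℝ} (h0 : 0 ≤ t) (h1 : t ≤ 1) :
    t ^ 2 ≤ klFun (1 + t) + klFun (1 - t) := by
  let φ (s : ℝ) := klFun (1 + s) + klFun (1 - s) - s ^ 2
  have hφ' : ∀ s ∈ Set.Ioo (0 : ℝ) 1, HasDerivAt φ (log (1 + s) - log (1 - s) - 2 * s) s := by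
    intro s ⟨hs0, hs1⟩
    have hplus := (hasDerivAt_klFun (by linarith : 1 + s ≠ 0)).comp s
      ((hasDerivAt_id s).const_add 1)
    have hminus := (hasDerivAt_klFun (by linarith : 1 - s ≠ 0)).comp s
      ((hasDerivAt_id s).const_sub 1)
    refine ((hplus.add hminus).sub (hasDerivAt_pow 2 s)).congr_deriv ?_
    push_cast
    ring
  have hmono : MonotoneOn φ (Set.Icc 0 1) := by
    refine monotoneOn_of_deriv_nonneg (convex_Icc 0 1) (by fun_prop) (fun s hs => ?_) fun s hs => ?_
    all_goals rw [interior_Icc] at hs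
    · exact (hφ' s hs).differentiableAt.differentiableWithinAt
    · rw [(hφ' s hs).deriv]
      linarith [two_mul_le_log_one_add_sub_log_one_sub hs.1.le hs.2]
  simpa [φ, klFun_one] using hmono ⟨le_rfl, zero_le_one⟩ ⟨h0, h1⟩ h0

lemma sq_sub_one_le_klFun_add_klFun_two_sub {x : ℝ} (h0 : 0 ≤ x) (h2 : x ≤ 2) :
    (x - 1) ^ 2 ≤ klFun x + klFun (2 - x) := by
  rcases le_total 1 x with hx | hx
  · have := sq_le_klFun_one_add_add_klFun_one_sub (t := x - 1) (by linarith) (by linarith)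
    rwa [add_sub_cancel, show 1 - (x - 1) = 2 - x by ring] at this
  · have := sq_le_klFun_one_add_add_klFun_one_sub (t := 1 - x) (by linarith) (by linarith)
    rwa [sub_sub_cancel, show 1 + (1 - x) = 2 - x by ring, ← neg_sub, neg_sq, add_comm] at this

lemma integral_abs_le_sqrt_integral_sq {α : Type*} [MeasurableSpace α] {μ : Measure α}
    [IsProbabilityMeasure μ] {f : α → ℝ} (hf : MemLp f 2 μ) :
    ∫ x, |f x| ∂μ ≤ √(∫ x, f x ^ 2 ∂μ) := by
  refine le_sqrt_of_sq_le ?_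
  have := even_two.convexOn_pow.map_integral_le (continuous_pow 2).continuousOn isClosed_univ
    (ae_of_all _ fun _ => Set.mem_univ _) (hf.integrable one_le_two).abs
    (by simpa [Function.comp_def] using hf.integrable_sq)
  simpa using this

section midMeasure

variable {Ω : Type*} [MeasurableSpace Ω] (P Q : Measure Ω)

instance [IsFiniteMeasure P] [IsFiniteMeasure Q] : IsFiniteMeasure (midMeasure P Q) :=
  ⟨by simp [midMeasure, ENNReal.mul_lt_top, measure_lt_top]⟩

instance [IsProbabilityMeasure P] [IsProbabilityMeasure Q] :
    IsProbabilityMeasure (midMeasure P Q) :=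
  ⟨by simp [midMeasure, ENNReal.inv_two_add_inv_two]⟩

lemma absolutelyContinuous_midMeasure_left : P ≪ midMeasure P Q :=
  (Measure.absolutelyContinuous_smul (by simp)).add_right _

lemma absolutelyContinuous_midMeasure_right : Q ≪ midMeasure P Q :=
  (Measure.absolutelyContinuous_smul (by simp)).add_right' _

lemma two_smul_midMeasure : (2 : ℝ≥0∞) • midMeasure P Q = P + Q := by
  simp only [midMeasure, smul_add, smul_smul,
    ENNReal.mul_inv_cancel two_ne_zero ENNReal.ofNat_ne_top, one_smul]

lemma toReal_rnDeriv_add_toReal_rnDeriv_midMeasure [IsFiniteMeasure P] [IsFiniteMeasure Q] :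
    ∀ᵐ z ∂midMeasure P Q,
      (P.rnDeriv (midMeasure P Q) z).toReal + (Q.rnDeriv (midMeasure P Q) z).toReal = 2 := by
  set M := midMeasure P Q
  have hsum : P.rnDeriv M + Q.rnDeriv M =ᵐ[M] fun _ => 2 := by
    filter_upwards [(Measure.rnDeriv_add P Q M).symm, Measure.rnDeriv_self M,
      Measure.rnDeriv_smul_left_of_ne_top M M (r := 2) ENNReal.ofNat_ne_top] with z hPQ hM h2M
    rw [hPQ, ← two_smul_midMeasure, h2M, Pi.smul_apply, hM, smul_eq_mul, mul_one]
  filter_upwards [hsum, P.rnDeriv_lt_top M, Q.rnDeriv_lt_top M]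
    with z (hz : P.rnDeriv M z + Q.rnDeriv M z = 2) hP hQ
  rw [← ENNReal.toReal_add hP.ne hQ.ne, hz, ENNReal.toReal_ofNat]

lemma abs_toReal_rnDeriv_midMeasure_sub_one_le_one [IsFiniteMeasure P] [IsFiniteMeasure Q] :
    ∀ᵐ z ∂midMeasure P Q, |(P.rnDeriv (midMeasure P Q) z).toReal - 1| ≤ 1 := by
  filter_upwards [toReal_rnDeriv_add_toReal_rnDeriv_midMeasure P Q] with z hz
  have := (Q.rnDeriv (midMeasure P Q) z).toReal_nonneg
  exact abs_le.2 ⟨by linarith [(P.rnDeriv (midMeasure P Q) z).toReal_nonneg], by linarith⟩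

end midMeasure

lemma klDiv_eq_klDiv {Ω : Type*} [MeasurableSpace Ω] (P Q : Measure Ω) [IsProbabilityMeasure P]
    [IsProbabilityMeasure Q] : klDiv P Q = InformationTheory.klDiv P Q := by
  unfold klDiv
  split_ifs with h
  · simp [InformationTheory.klDiv_of_ac_of_integrable h.1 h.2]
  · exact (InformationTheory.klDiv_eq_top_iff.2 fun hac hint => h ⟨hac, hint⟩).symm

section jsDiv

variable {Ω : Type*} [MeasurableSpace Ω] (P Q : Measure Ω)

lemma integrable_klFun_toReal_rnDeriv_midMeasure [IsFiniteMeasure P] [IsFiniteMeasure Q] :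
    Integrable (fun z => klFun (P.rnDeriv (midMeasure P Q) z).toReal) (midMeasure P Q) := by
  refine Integrable.of_bound ?_ 1 ?_
  · exact (InformationTheory.measurable_klFun.comp
      (Measure.measurable_rnDeriv _ _).ennreal_toReal).aestronglyMeasurable
  filter_upwards [abs_toReal_rnDeriv_midMeasure_sub_one_le_one P Q] with z hz
  have hF := (P.rnDeriv (midMeasure P Q) z).toReal_nonneg
  rw [norm_of_nonneg (klFun_nonneg hF)]
  exact (klFun_le_sq_sub_one hF).trans (sq_le_one_iff_abs_le_one _ |>.2 hz)

lemma integrable_klFun_toReal_rnDeriv_midMeasure_right [IsFiniteMeasure P] [IsFiniteMeasure Q] :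
    Integrable (fun z => klFun (Q.rnDeriv (midMeasure P Q) z).toReal) (midMeasure P Q) := by
  simpa only [midMeasure, add_comm] using integrable_klFun_toReal_rnDeriv_midMeasure Q P

lemma memLp_toReal_rnDeriv_midMeasure_sub_one [IsFiniteMeasure P] [IsFiniteMeasure Q]
    (p : ℝ≥0∞) :
    MemLp (fun z => (P.rnDeriv (midMeasure P Q) z).toReal - 1) p (midMeasure P Q) :=
  MemLp.of_bound ((Measure.measurable_rnDeriv _ _).ennreal_toReal.sub_const 1).aestronglyMeasurable
    1 (abs_toReal_rnDeriv_midMeasure_sub_one_le_one P Q)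

lemma two_mul_toReal_jsDiv [IsProbabilityMeasure P] [IsProbabilityMeasure Q] :
    2 * (jsDiv P Q).toReal = ∫ z, klFun (P.rnDeriv (midMeasure P Q) z).toReal
      + klFun (Q.rnDeriv (midMeasure P Q) z).toReal ∂midMeasure P Q := by
  have hP := absolutelyContinuous_midMeasure_left P Q
  have hQ := absolutelyContinuous_midMeasure_right P Q
  have hintP := integrable_klFun_toReal_rnDeriv_midMeasure P Q
  have hintQ := integrable_klFun_toReal_rnDeriv_midMeasure_right P Q
  have hfinP := InformationTheory.klDiv_ne_top hP
    ((InformationTheory.integrable_klFun_rnDeriv_iff hP).1 hintP)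
  have hfinQ := InformationTheory.klDiv_ne_top hQ
    ((InformationTheory.integrable_klFun_rnDeriv_iff hQ).1 hintQ)
  rw [jsDiv, klDiv_eq_klDiv, klDiv_eq_klDiv, ENNReal.toReal_add (by finiteness) (by finiteness),
    ENNReal.toReal_mul, ENNReal.toReal_mul, InformationTheory.toReal_klDiv_eq_integral_klFun hP,
    InformationTheory.toReal_klDiv_eq_integral_klFun hQ, integral_add hintP hintQ,
    ENNReal.toReal_inv, ENNReal.toReal_ofNat]
  ring

lemma integral_sq_toReal_rnDeriv_midMeasure_sub_one_le [IsProbabilityMeasure P]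
    [IsProbabilityMeasure Q] :
    ∫ z, ((P.rnDeriv (midMeasure P Q) z).toReal - 1) ^ 2 ∂midMeasure P Q
      ≤ 2 * (jsDiv P Q).toReal := by
  rw [two_mul_toReal_jsDiv]
  refine integral_mono_ae ?_ ?_ ?_
  · exact (memLp_toReal_rnDeriv_midMeasure_sub_one P Q 2).integrable_sq
  · exact (integrable_klFun_toReal_rnDeriv_midMeasure P Q).add
      (integrable_klFun_toReal_rnDeriv_midMeasure_right P Q)
  filter_upwards [toReal_rnDeriv_add_toReal_rnDeriv_midMeasure P Q] with z hz
  rw [eq_sub_of_add_eq' hz]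
  exact sq_sub_one_le_klFun_add_klFun_two_sub ENNReal.toReal_nonneg
    (by linarith [(Q.rnDeriv (midMeasure P Q) z).toReal_nonneg])

end jsDiv

lemma integral_sub_integral_le_mul_integral_abs_sub_rnDeriv {Ω : Type*} [MeasurableSpace Ω]
    {P Q M : Measure Ω} [IsFiniteMeasure P] [IsFiniteMeasure Q] [SigmaFinite M]
    (hP : P ≪ M) (hQ : Q ≪ M) {v : Ω → ℝ} (hv : Measurable v) {c : ℝ} (hvc : ∀ z, |v z| ≤ c) :
    ∫ z, v z ∂P - ∫ z, v z ∂Q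
      ≤ c * ∫ z, |(P.rnDeriv M z).toReal - (Q.rnDeriv M z).toReal| ∂M := by
  have hbdd : ∀ᵐ z ∂M, ‖v z‖ ≤ c := ae_of_all _ hvc
  have hPv := (P.integrable_toReal_rnDeriv (ν := M)).mul_bdd hv.aestronglyMeasurable hbdd
  have hQv := (Q.integrable_toReal_rnDeriv (ν := M)).mul_bdd hv.aestronglyMeasurable hbdd
  calc ∫ z, v z ∂P - ∫ z, v z ∂Q
      = ∫ z, ((P.rnDeriv M z).toReal - (Q.rnDeriv M z).toReal) * v z ∂M := by
        simp_rw [← integral_rnDeriv_smul hP, ← integral_rnDeriv_smul hQ, smul_eq_mul, sub_mul]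
        exact (integral_sub hPv hQv).symm
    _ ≤ ∫ z, |(P.rnDeriv M z).toReal - (Q.rnDeriv M z).toReal| * c ∂M := by
        refine integral_mono ((hPv.sub hQv).congr (ae_of_all _ fun z => (sub_mul ..).symm))
          ((P.integrable_toReal_rnDeriv.sub Q.integrable_toReal_rnDeriv).abs.mul_const c)
          fun z => ?_
        exact (le_abs_self _).trans
          (abs_mul _ (v z) ▸ mul_le_mul_of_nonneg_left (hvc z) (abs_nonneg _))
    _ = c * ∫ z, |(P.rnDeriv M z).toReal - (Q.rnDeriv M z).toReal| ∂M := by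
        rw [integral_mul_const, mul_comm]

theorem integral_sub_integral_le_sqrt_two_mul_sqrt_jsDiv {Ω : Type*} [MeasurableSpace Ω]
    (P Q : Measure Ω) [IsProbabilityMeasure P] [IsProbabilityMeasure Q] {u : Ω → ℝ}
    (hu : Measurable u) {C : ℝ} (hC : 0 ≤ C) (hu0 : ∀ z, 0 ≤ u z) (huC : ∀ z, u z ≤ C) :
    ∫ z, u z ∂P - ∫ z, u z ∂Q ≤ √2 * C * √(jsDiv P Q).toReal := by
  set M := midMeasure P Q
  set F := fun z => (P.rnDeriv M z).toReal
  have hshift (μ : Measure Ω) [IsProbabilityMeasure μ] :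
      ∫ z, u z - C / 2 ∂μ = ∫ z, u z ∂μ - C / 2 := by
    rw [integral_sub (Integrable.of_bound hu.aestronglyMeasurable C
      (ae_of_all _ fun z => (norm_of_nonneg (hu0 z)).trans_le (huC z))) (integrable_const _)]
    simp
  have htv : ∫ z, |F z - (Q.rnDeriv M z).toReal| ∂M = 2 * ∫ z, |F z - 1| ∂M := by
    rw [← integral_const_mul]
    refine integral_congr_ae ?_
    filter_upwards [toReal_rnDeriv_add_toReal_rnDeriv_midMeasure P Q] with z hz
    rw [eq_sub_of_add_eq' hz, show F z - (2 - F z) = 2 * (F z - 1) by ring, abs_mul, abs_two]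
  calc ∫ z, u z ∂P - ∫ z, u z ∂Q = ∫ z, u z - C / 2 ∂P - ∫ z, u z - C / 2 ∂Q := by
        rw [hshift, hshift]; ring
    _ ≤ C / 2 * ∫ z, |F z - (Q.rnDeriv M z).toReal| ∂M :=
        integral_sub_integral_le_mul_integral_abs_sub_rnDeriv
          (absolutelyContinuous_midMeasure_left P Q) (absolutelyContinuous_midMeasure_right P Q)
          (hu.sub_const _) fun z => abs_le.2 ⟨by linarith [hu0 z], by linarith [huC z]⟩
    _ = C * ∫ z, |F z - 1| ∂M := by rw [htv]; ring
    _ ≤ C * √(∫ z, (F z - 1) ^ 2 ∂M) := by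
        gcongr
        exact integral_abs_le_sqrt_integral_sq (memLp_toReal_rnDeriv_midMeasure_sub_one P Q 2)
    _ ≤ C * √(2 * (jsDiv P Q).toReal) := by
        gcongr
        exact integral_sq_toReal_rnDeriv_midMeasure_sub_one_le P Q
    _ = √2 * C * √(jsDiv P Q).toReal := by
        rw [sqrt_mul zero_le_two]
        ring

theorem osheda_relabel_source_error_upper_bound_general
    {Xs Xt Z Y : Type*} [MeasurableSpace Xs] [MeasurableSpace Xt]
    [MeasurableSpace Z] [MeasurableSpace Y]
    (K : Set Y) (hK : MeasurableSet K) (unk : Y)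
    (Ps : Measure (Xs × Y)) (Pt : Measure (Xt × Y))
    [IsProbabilityMeasure Ps] [IsProbabilityMeasure Pt]
    (fs : Xs → Z) (ft : Xt → Z) (hfs : Measurable fs) (hft : Measurable ft)
    (ℓ : Z × Y → ℝ) (hℓ : Measurable ℓ) (C : ℝ) (hC : 0 ≤ C)
    (hℓ0 : ∀ z y, 0 ≤ ℓ (z, y)) (hℓC : ∀ z y, ℓ (z, y) ≤ C)
    (lam : ℝ) (hlam : lam = (Pt {p | p.2 ∈ K}).toReal)
    (hlam1 : lam < 1)
    (htgt : Pt {p | p.2 ∉ K ∧ p.2 ≠ unk} = 0) :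
    ∫ p, ℓ (fs p.1, unk) ∂Ps ≤
      ∫ p, ℓ (ft p.1, p.2) ∂(Pt[|{p | p.2 ∉ K}])
      + Real.sqrt 2 * C *
          Real.sqrt ((jsDiv (Ps.map (fun p => fs p.1))
            ((Pt[|{p | p.2 ∉ K}]).map (fun p => ft p.1))).toReal) := by
  set U := {p : Xt × Y | p.2 ∉ K}
  have hU : MeasurableSet U := (measurable_snd hK).compl
  have hPtU : Pt U ≠ 0 := fun h => by
    have hK1 : Pt {p | p.2 ∈ K} = 1 := (prob_compl_eq_zero_iff (measurable_snd hK)).1 h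
    simp [hlam, hK1] at hlam1
  have := cond_isProbabilityMeasure hPtU
  have hunk_ae : ∀ᵐ p ∂Pt[|U], p.2 = unk := by
    rw [ae_iff, cond_apply hU, show U ∩ {p | ¬p.2 = unk} = {p | p.2 ∉ K ∧ p.2 ≠ unk} from rfl,
      htgt, mul_zero]
  have hs : Measurable fun p : Xs × Y => fs p.1 := hfs.comp measurable_fst
  have ht : Measurable fun p : Xt × Y => ft p.1 := hft.comp measurable_fst
  have hu : Measurable fun z => ℓ (z, unk) := hℓ.comp (measurable_id.prodMk measurable_const)
  have := Measure.isProbabilityMeasure_map (μ := Ps) hs.aemeasurable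
  have := Measure.isProbabilityMeasure_map (μ := Pt[|U]) ht.aemeasurable
  have hbound := integral_sub_integral_le_sqrt_two_mul_sqrt_jsDiv (Ps.map fun p => fs p.1)
    ((Pt[|U]).map fun p => ft p.1) hu hC (hℓ0 · unk) (hℓC · unk)
  rw [integral_map hs.aemeasurable hu.aestronglyMeasurable,
    integral_map ht.aemeasurable hu.aestronglyMeasurable] at hbound
  have hrelabel : ∫ p, ℓ (ft p.1, p.2) ∂Pt[|U] = ∫ p, ℓ (ft p.1, unk) ∂Pt[|U] :=
    integral_congr_ae (hunk_ae.mono fun p hp => by simp only [hp])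
  linarith

/-- Intermediate inequality in the proof of Proposition 1: the relabeled source error is
bounded by the unknown-class target error plus a representation-distance term. -/
theorem osheda_relabel_source_error_upper_bound
    {Xs Xt Z Y : Type*} [MeasurableSpace Xs] [MeasurableSpace Xt]
    [MeasurableSpace Z] [MeasurableSpace Y]
    (K : Set Y) (hK : MeasurableSet K) (unk : Y) (hunk : unk ∉ K)
    (Ps : Measure (Xs × Y)) (Pt : Measure (Xt × Y))
    [IsProbabilityMeasure Ps] [IsProbabilityMeasure Pt]
    (fs : Xs → Z) (ft : Xt → Z) (hfs : Measurable fs) (hft : Measurable ft)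
    (ℓ : Z × Y → ℝ) (hℓ : Measurable ℓ) (C : ℝ) (hC : 0 ≤ C)
    (hℓ0 : ∀ z y, 0 ≤ ℓ (z, y)) (hℓC : ∀ z y, ℓ (z, y) ≤ C)
    (lam : ℝ) (hlam : lam = (Pt {p | p.2 ∈ K}).toReal)
    (hlam0 : 0 < lam) (hlam1 : lam < 1)
    (hsrc : Ps {p | p.2 ∉ K} = 0)
    (htgt : Pt {p | p.2 ∉ K ∧ p.2 ≠ unk} = 0) :
    ∫ p, ℓ (fs p.1, unk) ∂Ps ≤
      ∫ p, ℓ (ft p.1, p.2) ∂(Pt[|{p | p.2 ∉ K}])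
      + Real.sqrt 2 * C *
          Real.sqrt ((jsDiv (Ps.map (fun p => fs p.1))
            ((Pt[|{p | p.2 ∉ K}]).map (fun p => ft p.1))).toReal) :=
  osheda_relabel_source_error_upper_bound_general K hK unk Ps Pt fs ft hfs hft ℓ hℓ C hC hℓ0 hℓC lam
    hlam hlam1 htgt
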